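/- Let k be a field and f, g : H → K two morphisms of k-Hopf algebras. Set S := {h ∈ H | f(h) = g(h)} and let D be the sum of all subcoalgebras of H contained in S, which is a Hopf subalgebra of H. Then the pair (D, i), with i : D → H the canonical inclusion, is an equalizer of f and g in the category of k-Hopf algebras. -/

import Mathlib

/-!
The sum `D` of all subcoalgebras of `H` inside the equalizer subalgebra `S = {f = g}` is the
largest subcoalgebra of `H` contained in `S`. Products of subcoalgebras, the unit line `k · 1`
and images of subcoalgebras under the antipode are again subcoalgebras (the last because
`Δ ∘ S = (S ⊗ S) ∘ τ ∘ Δ`), and `S` is a subalgebra stable under the antipode (bialgebra maps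
between Hopf algebras commute with antipodes); hence `D` is a Hopf subalgebra. If a Hopf
algebra map `h` satisfies `f ∘ h = g ∘ h`, its image is a subcoalgebra inside `S`, hence inside
`D`. Over a field the inclusion `D → H` stays injective after tensoring, so the Hopf structure
of `H` restricts to `D` and `h` factors uniquely through `D` as a bialgebra map.
-/

universe u v w

/-- `V` is a subcoalgebra of the coalgebra `C`: the comultiplication maps `V` into
the image of `V ⊗ V` in `C ⊗ C`. -/
def IsSubcoalgebra {k : Type u} [CommRing k] {C : Type v} [AddCommGroup C] [Module k C]
    [Coalgebra k C] (V : Submodule k C) : Prop :=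
  ∀ v ∈ V, Coalgebra.comul (R := k) v ∈
    LinearMap.range (TensorProduct.map V.subtype V.subtype)

open TensorProduct Coalgebra HopfAlgebra LinearMap WithConv

namespace TensorProduct

variable {k M N P Q A : Type*} [CommRing k] [AddCommGroup M] [Module k M] [AddCommGroup N]
  [Module k N] [AddCommGroup P] [Module k P] [AddCommGroup Q] [Module k Q]

lemma map_range_mapIncl (f : M →ₗ[k] P) (g : N →ₗ[k] Q) (p : Submodule k M) (q : Submodule k N) :
    (range (mapIncl p q)).map (map f g) = range (mapIncl (p.map f) (q.map g)) := by
  rw [← range_comp, ← map_comp, range_map, range_mapIncl, range_comp, range_comp,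
    Submodule.range_subtype, Submodule.range_subtype]

lemma range_mapIncl_mul_le [Ring A] [Algebra k A] (V W : Submodule k A) :
    range (mapIncl V V) * range (mapIncl W W) ≤ range (mapIncl (V * W) (V * W)) := by
  simp only [mapIncl, range_map_eq_span_tmul, Submodule.span_mul_span]
  refine Submodule.span_mono ?_
  rintro _ ⟨_, ⟨a, b, rfl⟩, _, ⟨c, d, rfl⟩, rfl⟩
  exact ⟨⟨a * c, Submodule.mul_mem_mul a.2 c.2⟩, ⟨b * d, Submodule.mul_mem_mul b.2 d.2⟩,
    (Algebra.TensorProduct.tmul_mul_tmul _ _ _ _).symm⟩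

end TensorProduct

section Antipode

variable {R H B : Type*} [CommSemiring R] [Semiring H] [Semiring B]

section

variable [HopfAlgebra R H] [Algebra R B]

lemma AlgHom.comp_antipode_convMul_self (φ : H →ₐ[R] B) :
    toConv (φ.toLinearMap ∘ₗ antipode R) * toConv φ.toLinearMap = 1 := by
  have := algHom_comp_convMul_distrib φ (toConv (antipode R)) (toConv LinearMap.id)
  rw [antipode_mul_id] at this
  exact ofConv_injective (this.symm.trans (by ext; simp))

lemma AlgHom.convMul_comp_antipode (φ : H →ₐ[R] B) :
    toConv φ.toLinearMap * toConv (φ.toLinearMap ∘ₗ antipode R) = 1 := by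
  have := algHom_comp_convMul_distrib φ (toConv LinearMap.id) (toConv (antipode R))
  rw [id_mul_antipode] at this
  exact ofConv_injective (this.symm.trans (by ext; simp))

lemma BialgHom.antipode_comp {K : Type*} [Semiring K] [HopfAlgebra R K] (f : H →ₐc[R] K) :
    antipode R ∘ₗ f.toLinearMap = f.toLinearMap ∘ₗ antipode R := by
  refine toConv_injective (left_inv_eq_right_inv (a := toConv f.toLinearMap) ?_
    (AlgHom.convMul_comp_antipode (AlgHomClass.toAlgHom f)))
  have := convMul_comp_coalgHom_distrib (toConv (antipode R)) (toConv LinearMap.id) f.toCoalgHom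
  rw [antipode_mul_id, convOne_comp_coalgHom] at this
  exact ofConv_injective this.symm

lemma BialgHom.map_antipode {K : Type*} [Semiring K] [HopfAlgebra R K] (f : H →ₐc[R] K)
    (x : H) : f (antipode R x) = antipode R (f x) :=
  congr($(BialgHom.antipode_comp f) x).symm

/- In the convolution monoid of linear maps `H → H ⊗ H`, `Δ = ι₁ * ι₂` for the two algebra
inclusions, whose inverses are `ιⱼ ∘ S`; so `(ι₂ ∘ S) * (ι₁ ∘ S) = (S ⊗ S) ∘ τ ∘ Δ` is a left
inverse of `Δ`, while `Δ ∘ S` is a right inverse of `Δ` because `Δ` is an algebra map. -/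
open Algebra.TensorProduct in
lemma HopfAlgebra.comul_comp_antipode :
    comul ∘ₗ antipode R = map (antipode R) (antipode R) ∘ₗ
      (TensorProduct.comm R H H).toLinearMap ∘ₗ (comul : H →ₗ[R] H ⊗[R] H) := by
  set l : H →ₐ[R] H ⊗[R] H := includeLeft
  set r : H →ₐ[R] H ⊗[R] H := includeRight
  have hcomul :
      toConv (comul : H →ₗ[R] H ⊗[R] H) = toConv l.toLinearMap * toConv r.toLinearMap := by
    have : mul' R (H ⊗[R] H) ∘ₗ map l.toLinearMap r.toLinearMap = LinearMap.id := by
      ext a b; simp [l, r]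
    rw [LinearMap.convMul_def, ← comp_assoc, this, id_comp]
  have hanti : toConv (map (antipode R) (antipode R) ∘ₗ
      (TensorProduct.comm R H H).toLinearMap ∘ₗ (comul : H →ₗ[R] H ⊗[R] H)) =
      toConv (r.toLinearMap ∘ₗ antipode R) * toConv (l.toLinearMap ∘ₗ antipode R) := by
    have : mul' R (H ⊗[R] H) ∘ₗ map (r.toLinearMap ∘ₗ antipode R) (l.toLinearMap ∘ₗ antipode R) =
        map (antipode R) (antipode R) ∘ₗ (TensorProduct.comm R H H).toLinearMap := by
      ext a b; simp [l, r]
    simp only [LinearMap.convMul_def, ← comp_assoc, this]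
  symm
  refine toConv_injective (left_inv_eq_right_inv (a := toConv comul) ?_
    (AlgHom.convMul_comp_antipode (Bialgebra.comulAlgHom R H)))
  rw [hanti, hcomul, mul_assoc, ← mul_assoc _ (toConv l.toLinearMap),
    AlgHom.comp_antipode_convMul_self, one_mul, AlgHom.comp_antipode_convMul_self]

end

noncomputable abbrev HopfAlgebra.ofInjective [Bialgebra R H] [HopfAlgebra R B] (f : H →ₐc[R] B)
    (hf : Function.Injective f) (S : H →ₗ[R] H)
    (hS : antipode R ∘ₗ f.toLinearMap = f.toLinearMap ∘ₗ S) : HopfAlgebra R H := by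
  have hf' : Function.Injective (AlgHomClass.toAlgHom f).toLinearMap := hf
  have hone : (AlgHomClass.toAlgHom f).toLinearMap ∘ₗ (1 : WithConv (H →ₗ[R] H)).ofConv =
      (1 : WithConv (B →ₗ[R] B)).ofConv ∘ₗ f.toLinearMap := by
    ext; simp [AlgHomClass.commutes]
  refine .ofConvInverse S (ofConv_injective ?_) (ofConv_injective ?_) <;>
    rw [← LinearMap.cancel_left hf', hone]
  · calc (AlgHomClass.toAlgHom f).toLinearMap ∘ₗ (toConv S * toConv LinearMap.id).ofConv
        = (toConv (f.toLinearMap ∘ₗ S) * toConv f.toLinearMap).ofConv := by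
          rw [algHom_comp_convMul_distrib]; rfl
      _ = (toConv (antipode R) * toConv LinearMap.id : WithConv (B →ₗ[R] B)).ofConv ∘ₗ
            f.toCoalgHom.toLinearMap := by
          rw [convMul_comp_coalgHom_distrib, hS]; rfl
      _ = _ := by rw [antipode_mul_id]
  · calc (AlgHomClass.toAlgHom f).toLinearMap ∘ₗ (toConv LinearMap.id * toConv S).ofConv
        = (toConv f.toLinearMap * toConv (f.toLinearMap ∘ₗ S)).ofConv := by
          rw [algHom_comp_convMul_distrib]; rfl
      _ = (toConv LinearMap.id * toConv (antipode R) : WithConv (B →ₗ[R] B)).ofConv ∘ₗ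
            f.toCoalgHom.toLinearMap := by
          rw [convMul_comp_coalgHom_distrib, hS]; rfl
      _ = _ := by rw [id_mul_antipode]

end Antipode

section Subcoalgebra

variable {k C D : Type*} [CommRing k] [AddCommGroup C] [Module k C] [Coalgebra k C]
  [AddCommGroup D] [Module k D] [Coalgebra k D]

lemma isSubcoalgebra_iff_le_comap {V : Submodule k C} :
    IsSubcoalgebra V ↔ V ≤ (range (mapIncl V V)).comap (comul (R := k)) :=
  Iff.rfl

lemma isSubcoalgebra_top : IsSubcoalgebra (⊤ : Submodule k C) := fun _ _ => by
  rw [range_mapIncl, map₂_mk_top_top_eq_top]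
  trivial

lemma IsSubcoalgebra.sSup {s : Set (Submodule k C)} (hs : ∀ V ∈ s, IsSubcoalgebra V) :
    IsSubcoalgebra (sSup s) :=
  sSup_le fun V hV => (isSubcoalgebra_iff_le_comap.mp (hs V hV)).trans
    (Submodule.comap_mono (range_mapIncl_mono (le_sSup hV) (le_sSup hV)))

lemma IsSubcoalgebra.map {V : Submodule k C} (hV : IsSubcoalgebra V) (φ : C →ₗc[k] D) :
    IsSubcoalgebra (V.map (φ : C →ₗ[k] D)) := by
  rintro _ ⟨v, hv, rfl⟩
  rw [← map_range_mapIncl, CoalgHom.coe_toLinearMap, ← CoalgHomClass.map_comp_comul_apply]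
  exact Submodule.mem_map_of_mem (hV v hv)

lemma isSubcoalgebra_range (φ : C →ₗc[k] D) : IsSubcoalgebra (range (φ : C →ₗ[k] D)) := by
  rw [range_eq_map]
  exact isSubcoalgebra_top.map φ

variable {H : Type*} [Ring H]

lemma IsSubcoalgebra.mul [Bialgebra k H] {V W : Submodule k H} (hV : IsSubcoalgebra V)
    (hW : IsSubcoalgebra W) : IsSubcoalgebra (V * W) :=
  isSubcoalgebra_iff_le_comap.mpr <| Submodule.mul_le.mpr fun m hm n hn => by
    rw [Submodule.mem_comap, Bialgebra.comul_mul]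
    exact range_mapIncl_mul_le V W (Submodule.mul_mem_mul (hV m hm) (hW n hn))

lemma isSubcoalgebra_one [Bialgebra k H] : IsSubcoalgebra (1 : Submodule k H) := by
  rw [Submodule.one_eq_range]
  exact isSubcoalgebra_range (Bialgebra.unitBialgHom k H).toCoalgHom

lemma IsSubcoalgebra.map_antipode [HopfAlgebra k H] {V : Submodule k H}
    (hV : IsSubcoalgebra V) : IsSubcoalgebra (V.map (antipode k)) := by
  rintro _ ⟨v, hv, rfl⟩
  obtain ⟨t, ht⟩ := hV v hv
  rw [← map_range_mapIncl, ← comp_apply, comul_comp_antipode, comp_apply, comp_apply, ← ht,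
    LinearEquiv.coe_coe, ← map_comm]
  exact Submodule.mem_map_of_mem (mem_range_self _ _)

end Subcoalgebra

section LargestSubcoalgebra

variable {k C : Type*} [CommRing k] [AddCommGroup C] [Module k C] [Coalgebra k C]

def Submodule.largestSubcoalgebra (W : Submodule k C) : Submodule k C :=
  sSup {V | IsSubcoalgebra V ∧ V ≤ W}

namespace Submodule

variable (W : Submodule k C)

lemma isSubcoalgebra_largestSubcoalgebra : IsSubcoalgebra W.largestSubcoalgebra :=
  IsSubcoalgebra.sSup fun _ hV => hV.1

lemma largestSubcoalgebra_le : W.largestSubcoalgebra ≤ W :=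
  sSup_le fun _ hV => hV.2

lemma le_largestSubcoalgebra {V : Submodule k C} (hV : IsSubcoalgebra V) (hVW : V ≤ W) :
    V ≤ W.largestSubcoalgebra :=
  le_sSup ⟨hV, hVW⟩

end Submodule

open Submodule

variable {H : Type*} [Ring H]

namespace Subalgebra

variable [Bialgebra k H] (B : Subalgebra k H)

lemma one_le_largestSubcoalgebra : 1 ≤ (toSubmodule B).largestSubcoalgebra :=
  le_largestSubcoalgebra _ isSubcoalgebra_one <| by
    rw [← Algebra.toSubmodule_bot]
    exact toSubmodule.monotone bot_le

lemma largestSubcoalgebra_mul_self_le :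
    (toSubmodule B).largestSubcoalgebra * (toSubmodule B).largestSubcoalgebra ≤
      (toSubmodule B).largestSubcoalgebra :=
  have hD := (toSubmodule B).isSubcoalgebra_largestSubcoalgebra
  have hle := (toSubmodule B).largestSubcoalgebra_le
  le_largestSubcoalgebra _ (hD.mul hD)
    ((mul_le_mul' hle hle).trans (isIdempotentElem_toSubmodule B).le)

def largestSubcoalgebra : Subalgebra k H :=
  (toSubmodule B).largestSubcoalgebra.toSubalgebra (one_le.mp B.one_le_largestSubcoalgebra)
    fun _ _ hx hy => B.largestSubcoalgebra_mul_self_le (mul_mem_mul hx hy)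

end Subalgebra

lemma Subalgebra.antipode_mem_largestSubcoalgebra [HopfAlgebra k H] {B : Subalgebra k H}
    (hB : ∀ x ∈ B, antipode k x ∈ B) {x : H} (hx : x ∈ B.largestSubcoalgebra) :
    antipode k x ∈ B.largestSubcoalgebra :=
  le_largestSubcoalgebra _ (isSubcoalgebra_largestSubcoalgebra _).map_antipode
    (by rintro _ ⟨y, hy, rfl⟩; exact hB y (largestSubcoalgebra_le _ hy)) (mem_map_of_mem hx)

end LargestSubcoalgebra

section Field

variable {k : Type*} [Field k]

noncomputable abbrev Coalgebra.ofInjective {V C : Type*} [AddCommGroup V] [Module k V]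
    [AddCommGroup C] [Module k C] [Coalgebra k C] (i : V →ₗ[k] C) (hi : Function.Injective i)
    (δ : V →ₗ[k] V ⊗[k] V) (hδ : map i i ∘ₗ δ = comul ∘ₗ i) : Coalgebra k V where
  comul := δ
  counit := counit ∘ₗ i
  coassoc := by
    have hl : map i (map i i) ∘ₗ lTensor V δ = lTensor C comul ∘ₗ map i i := by
      simp only [lTensor, ← map_comp, hδ, LinearMap.id_comp, LinearMap.comp_id]
    have hr : map (map i i) i ∘ₗ rTensor V δ = rTensor C comul ∘ₗ map i i := by
      simp only [rTensor, ← map_comp, hδ, LinearMap.id_comp, LinearMap.comp_id]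
    rw [← cancel_left (map_injective_of_flat_flat i (map i i) hi
      (map_injective_of_flat_flat i i hi hi))]
    calc map i (map i i) ∘ₗ (_root_.TensorProduct.assoc k V V V).toLinearMap ∘ₗ
          rTensor V δ ∘ₗ δ
        = (_root_.TensorProduct.assoc k C C C).toLinearMap ∘ₗ
            (rTensor C comul ∘ₗ map i i) ∘ₗ δ := by
          rw [← comp_assoc (rTensor V δ ∘ₗ δ), map_map_comp_assoc_eq, comp_assoc, ← hr,
            comp_assoc]
      _ = (lTensor C comul ∘ₗ map i i) ∘ₗ δ := by
          simpa only [comp_assoc, hδ] using congr($coassoc ∘ₗ i)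
      _ = map i (map i i) ∘ₗ lTensor V δ ∘ₗ δ := by rw [← hl, comp_assoc]
  rTensor_counit_comp_comul := by
    have h : lTensor k i ∘ₗ rTensor V (counit ∘ₗ i) = rTensor C counit ∘ₗ map i i := by
      simp only [lTensor, rTensor, ← map_comp, LinearMap.id_comp, LinearMap.comp_id]
    rw [← cancel_left (Module.Flat.lTensor_preserves_injective_linearMap (M := k) i hi),
      ← comp_assoc, h, comp_assoc, hδ, ← comp_assoc, rTensor_counit_comp_comul]
    rfl
  lTensor_counit_comp_comul := by
    have h : rTensor k i ∘ₗ lTensor V (counit ∘ₗ i) = lTensor C counit ∘ₗ map i i := by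
      simp only [lTensor, rTensor, ← map_comp, LinearMap.id_comp, LinearMap.comp_id]
    rw [← cancel_left (Module.Flat.rTensor_preserves_injective_linearMap (M := k) i hi),
      ← comp_assoc, h, comp_assoc, hδ, ← comp_assoc, lTensor_counit_comp_comul]
    rfl

noncomputable abbrev Bialgebra.ofInjective {A H : Type*} [Ring A] [Algebra k A] [Coalgebra k A]
    [Ring H] [Bialgebra k H] (i : A →ₐ[k] H)
    (hi : Function.Injective i) (hcounit : counit ∘ₗ i.toLinearMap = counit)
    (hcomul : map i.toLinearMap i.toLinearMap ∘ₗ comul = comul ∘ₗ i.toLinearMap) :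
    Bialgebra k A :=
  have hε (a : A) : counit (i a) = counit (R := k) a := congr($hcounit a)
  have hδ (a : A) : Algebra.TensorProduct.map i i (comul a) = comul (i a) := congr($hcomul a)
  have hii : Function.Injective (Algebra.TensorProduct.map i i) :=
    map_injective_of_flat_flat _ _ hi hi
  Bialgebra.mk' k A (by rw [← hε, map_one, Bialgebra.counit_one])
    (by intro a b; rw [← hε, ← hε, ← hε, map_mul, Bialgebra.counit_mul])
    (hii (by rw [hδ, map_one, Bialgebra.comul_one, map_one]))
    (by intro a b; exact hii (by rw [hδ, map_mul, Bialgebra.comul_mul, map_mul, hδ, hδ]))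

theorem Subalgebra.exists_injective_bialgHom_range_eq {H : Type v} [Ring H] [HopfAlgebra k H]
    (A : Subalgebra k H) (hA : IsSubcoalgebra (Subalgebra.toSubmodule A))
    (hS : ∀ x ∈ A, antipode k x ∈ A) :
    ∃ (D : Type v) (_ : Ring D) (_ : HopfAlgebra k D) (i : D →ₐc[k] H),
      Function.Injective i ∧ Set.range i = A := by
  set ι := A.val.toLinearMap
  have hι : Function.Injective ι := Subtype.val_injective
  have hδ := codRestrictOfInjective_comp (comul ∘ₗ ι) (TensorProduct.map ι ι)
    (map_injective_of_flat_flat ι ι hι hι) fun a => hA a a.2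
  let _ := Coalgebra.ofInjective ι hι _ hδ
  let _ := Bialgebra.ofInjective A.val hι rfl hδ
  let i : A →ₐc[k] H :=
    { A.val with map_smul' := ι.map_smul, counit_comp := rfl, map_comp_comul := hδ }
  let S : A →ₗ[k] A := (antipode k ∘ₗ ι).codRestrict (toSubmodule A) fun a => hS a a.2
  exact ⟨A, inferInstance, .ofInjective i hι S rfl, i, hι, Subtype.range_val⟩

theorem BialgHom.existsUnique_comp_eq_of_injective {A H X : Type*} [Ring A] [Bialgebra k A]
    [Ring H] [Bialgebra k H] [Semiring X] [Bialgebra k X] (i : A →ₐc[k] H)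
    (hi : Function.Injective i) (h : X →ₐc[k] H) (hh : ∀ x, h x ∈ Set.range i) :
    ∃! h' : X →ₐc[k] A, i.comp h' = h := by
  have hii : Function.Injective (map (i : A →ₗ[k] H) (i : A →ₗ[k] H)) :=
    map_injective_of_flat_flat _ _ hi hi
  let e := AlgEquiv.ofInjective (i : A →ₐ[k] H) hi
  let g : X →ₐ[k] A := e.symm.toAlgHom.comp ((h : X →ₐ[k] H).codRestrict _ hh)
  have hig (x : X) : i (g x) = h x := congr_arg Subtype.val (e.apply_symm_apply _)
  have hcounit : counit ∘ₗ g.toLinearMap = counit := by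
    ext x
    change counit (g x) = counit x
    rw [← CoalgHomClass.counit_comp_apply i, hig, CoalgHomClass.counit_comp_apply]
  have hcomul : map g.toLinearMap g.toLinearMap ∘ₗ comul = comul ∘ₗ g.toLinearMap := by
    have hig' : (i : A →ₗ[k] H) ∘ₗ g.toLinearMap = h := LinearMap.ext hig
    ext x
    apply hii
    rw [LinearMap.comp_apply, LinearMap.comp_apply, ← LinearMap.comp_apply (map _ _),
      ← TensorProduct.map_comp, hig',
      CoalgHomClass.map_comp_comul_apply, CoalgHomClass.map_comp_comul_apply]
    exact congr_arg comul (hig x).symm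
  refine ⟨{ g with
    map_smul' := g.toLinearMap.map_smul, counit_comp := hcounit, map_comp_comul := hcomul },
    ?_, ?_⟩
  · ext x
    exact hig x
  · intro h₁ hh₁
    ext x
    exact hi (congr($hh₁ x).trans (hig x).symm)

end Field

section Equalizer

variable {k H K : Type*} [CommRing k] [Ring H] [Ring K]

lemma BialgHom.ker_sub_eq_toSubmodule_equalizer [Bialgebra k H] [Bialgebra k K]
    (f g : H →ₐc[k] K) :
    ker (f.toCoalgHom.toLinearMap - g.toCoalgHom.toLinearMap) =
      Subalgebra.toSubmodule (AlgHom.equalizer (f : H →ₐ[k] K) g) := by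
  ext x
  rw [mem_ker, LinearMap.sub_apply, sub_eq_zero]
  rfl

lemma BialgHom.antipode_mem_equalizer [HopfAlgebra k H] [HopfAlgebra k K] (f g : H →ₐc[k] K)
    {x : H} (hx : x ∈ AlgHom.equalizer (f : H →ₐ[k] K) g) :
    antipode k x ∈ AlgHom.equalizer (f : H →ₐ[k] K) g := by
  simp only [AlgHom.mem_equalizer, BialgHom.coe_toAlgHom] at hx ⊢
  rw [f.map_antipode, g.map_antipode, hx]

end Equalizer

/-- Let `f, g : H → K` be morphisms of Hopf algebras and let `D` be the sum of all
subcoalgebras of `H` contained in `S = {h | f h = g h}` (a Hopf subalgebra of `H`).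
Then `(D, i)`, with `i` the canonical inclusion, is an equalizer of `f` and `g` in the
category of `k`-Hopf algebras: there is a Hopf algebra `D'` and an injective Hopf
algebra (i.e. bialgebra) map `i : D' → H` whose image is exactly `D`, such that
`f ∘ i = g ∘ i` and every Hopf algebra map `h : X → H` with `f ∘ h = g ∘ h` factors
uniquely through `i`. -/
theorem sum_of_subcoalgebras_is_equalizer_hopf {k : Type u} [Field k] {H K : Type v}
    [Ring H] [Ring K] [HopfAlgebra k H] [HopfAlgebra k K]
    (f g : H →ₐc[k] K) (D : Submodule k H)
    (hD : D = sSup {V : Submodule k H | IsSubcoalgebra V ∧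
      V ≤ LinearMap.ker (f.toCoalgHom.toLinearMap - g.toCoalgHom.toLinearMap)}) :
    ∃ (D' : Type v) (_ring : Ring D') (_hopf : HopfAlgebra k D') (i : D' →ₐc[k] H),
      Function.Injective ⇑i ∧
      Set.range ⇑i = (D : Set H) ∧
      f.comp i = g.comp i ∧
      ∀ (X : Type w) [Ring X] [HopfAlgebra k X] (h : X →ₐc[k] H),
        f.comp h = g.comp h → ∃! h' : X →ₐc[k] D', i.comp h' = h := by
  set B := AlgHom.equalizer (f : H →ₐ[k] K) g
  set A := B.largestSubcoalgebra
  have hDA : D = Subalgebra.toSubmodule A := by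
    rw [hD, BialgHom.ker_sub_eq_toSubmodule_equalizer]; rfl
  obtain ⟨D', _, _, i, hinj, hrange⟩ := A.exists_injective_bialgHom_range_eq
    (Submodule.isSubcoalgebra_largestSubcoalgebra _)
    fun _ => Subalgebra.antipode_mem_largestSubcoalgebra fun _ => f.antipode_mem_equalizer g
  refine ⟨D', inferInstance, ‹_›, i, hinj, by rw [hrange, hDA]; rfl, ?_, ?_⟩
  · ext x
    exact Submodule.largestSubcoalgebra_le _ (hrange ▸ Set.mem_range_self x)
  · intro X _ _ h hfg
    refine i.existsUnique_comp_eq_of_injective hinj h fun x => hrange ▸ ?_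
    refine Submodule.le_largestSubcoalgebra _ (isSubcoalgebra_range h.toCoalgHom) ?_
      (mem_range_self _ x)
    rintro _ ⟨y, rfl⟩
    exact congr($hfg y)
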